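/- arXiv:2510.03778 — 3 statements merged into one kernel-verified Lean document; each statement's English description precedes it below -/
import Mathlib

section
/- Geometric decay under a weak greedy condition: suppose at each step N the chosen direction w_{N+1} satisfies r_N(w_{N+1})²/a(w_{N+1},w_{N+1}) ≥ t²θ*² ‖r_N‖²_{a'}, where ‖r_N‖_{a'} denotes the dual norm of the residual with respect to the energy norm and t, θ* ∈ (0,1]. Then with exact line search updates u_{N+1} = u_N + τ_{N+1} w_{N+1}, the energy error satisfies ‖u − u_N‖_a ≤ (1 − t²θ*²)^{N/2} ‖u − u_0‖_a. -/
/-!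
The error `e_N = u - u_N` satisfies `r_N = a(e_N, ·)`, so exact line search along `w` is the
`a`-orthogonal projection of `e_N` off `w`: `‖e_{N+1}‖_a² = ‖e_N‖_a² - r_N(w)²/a(w,w)`.
Since `e_N` itself is a competitor in the supremum defining `‖r_N‖_{a'}`, the weak greedy condition
removes at least the fraction `t²θ²` of `‖e_N‖_a²` at every step.
-/

open Real

section LineSearch

variable {H : Type*} [AddCommGroup H] [Module ℝ H] {a : H →ₗ[ℝ] H →ₗ[ℝ] ℝ}

/-- Also valid when `a w w = 0`, where the step length `a e w / a w w` is `0`. -/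
theorem apply_sub_lineSearch_self (hsymm : ∀ x y : H, a x y = a y x) (e w : H) :
    a (e - (a e w / a w w) • w) (e - (a e w / a w w) • w) = a e e - a e w ^ 2 / a w w := by
  simp only [map_sub, map_smul, LinearMap.sub_apply, LinearMap.smul_apply, smul_eq_mul, hsymm w e]
  rcases eq_or_ne (a w w) 0 with hw | hw
  · simp [hw]
  · field_simp
    ring

theorem sq_apply_div_le (hsymm : ∀ x y : H, a x y = a y x) (hpsd : ∀ x : H, 0 ≤ a x x)
    (e w : H) : a e w ^ 2 / a w w ≤ a e e := by
  have := hpsd (e - (a e w / a w w) • w)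
  rw [apply_sub_lineSearch_self hsymm] at this
  linarith

theorem apply_div_sqrt_le (hsymm : ∀ x y : H, a x y = a y x) (hpsd : ∀ x : H, 0 ≤ a x x)
    (e z : H) : a e z / √(a z z) ≤ √(a e e) := by
  refine le_sqrt_of_sq_le ?_
  rw [div_pow, sq_sqrt (hpsd z)]
  exact sq_apply_div_le hsymm hpsd e z

theorem sqrt_apply_self_le_sSup (hsymm : ∀ x y : H, a x y = a y x)
    (hpsd : ∀ x : H, 0 ≤ a x x) (e : H) :
    √(a e e) ≤ sSup {s : ℝ | ∃ z : H, z ≠ 0 ∧ s = a e z / √(a z z)} := by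
  rcases eq_or_ne e 0 with rfl | he
  · rw [map_zero, sqrt_zero]
    exact Real.sSup_nonneg fun s ⟨_, _, hs⟩ ↦ by simp [hs]
  refine le_csSup ⟨√(a e e), ?_⟩ ⟨e, he, by rw [div_sqrt]⟩
  rintro s ⟨z, -, rfl⟩
  exact apply_div_sqrt_le hsymm hpsd e z

end LineSearch

theorem le_pow_mul_of_le_mul_succ {x : ℕ → ℝ} {q : ℝ} (hq : 0 ≤ q)
    (hx : ∀ n, x (n + 1) ≤ q * x n) (n : ℕ) : x n ≤ q ^ n * x 0 := by
  induction n with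
  | zero => simp
  | succ n ih =>
    calc x (n + 1) ≤ q * x n := hx n
      _ ≤ q * (q ^ n * x 0) := mul_le_mul_of_nonneg_left ih hq
      _ = q ^ (n + 1) * x 0 := by ring

theorem sqrt_pow_eq_rpow_div_two {q : ℝ} (hq : 0 ≤ q) (n : ℕ) :
    √(q ^ n) = q ^ ((n : ℝ) / 2) := by
  rw [sqrt_eq_rpow, ← rpow_natCast, ← rpow_mul hq]
  ring_nf

theorem geometric_energy_decay_general
    {H : Type*} [NormedAddCommGroup H] [InnerProductSpace ℝ H]
    (a : H →ₗ[ℝ] H →ₗ[ℝ] ℝ) (η : ℝ) (hη : 0 < η)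
    (hsymm : ∀ x y : H, a x y = a y x)
    (hcoer : ∀ x : H, η * ‖x‖ ^ 2 ≤ a x x)
    (ℓ : H →L[ℝ] ℝ) (u : H) (hu : ∀ v : H, a u v = ℓ v)
    (t θ : ℝ) (ht : t ∈ Set.Ioc (0 : ℝ) 1) (hθ : θ ∈ Set.Ioc (0 : ℝ) 1)
    (v : ℕ → H) (w : ℕ → H)
    (hgreedy : ∀ N : ℕ,
      t ^ 2 * θ ^ 2 *
        (sSup {s : ℝ | ∃ z : H, z ≠ 0 ∧ s = (ℓ z - a (v N) z) / Real.sqrt (a z z)}) ^ 2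
      ≤ (ℓ (w (N + 1)) - a (v N) (w (N + 1))) ^ 2 / a (w (N + 1)) (w (N + 1)))
    (hupd : ∀ N : ℕ, v (N + 1) = v N +
      ((ℓ (w (N + 1)) - a (v N) (w (N + 1))) / a (w (N + 1)) (w (N + 1))) • w (N + 1)) :
    ∀ N : ℕ, Real.sqrt (a (u - v N) (u - v N))
      ≤ (1 - t ^ 2 * θ ^ 2) ^ ((N : ℝ) / 2) * Real.sqrt (a (u - v 0) (u - v 0)) := by
  have hpsd (x : H) : 0 ≤ a x x := (by positivity : 0 ≤ η * ‖x‖ ^ 2).trans (hcoer x)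
  have hc : 0 ≤ t ^ 2 * θ ^ 2 ∧ t ^ 2 * θ ^ 2 ≤ 1 := by
    obtain ⟨ht0, ht1⟩ := ht
    obtain ⟨hθ0, hθ1⟩ := hθ
    exact ⟨by positivity, mul_le_one₀ (pow_le_one₀ ht0.le ht1) (by positivity)
      (pow_le_one₀ hθ0.le hθ1)⟩
  have hres (N : ℕ) (z : H) : ℓ z - a (v N) z = a (u - v N) z := by simp [hu]
  have hstep (N : ℕ) : a (u - v (N + 1)) (u - v (N + 1))
      ≤ (1 - t ^ 2 * θ ^ 2) * a (u - v N) (u - v N) := by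
    have hgreedyN := hgreedy N
    simp only [hres] at hgreedyN hupd
    have hdual := sqrt_apply_self_le_sSup hsymm hpsd (u - v N)
    have hsq := pow_le_pow_left₀ (sqrt_nonneg _) hdual 2
    rw [sq_sqrt (hpsd _)] at hsq
    rw [hupd, sub_add_eq_sub_sub, apply_sub_lineSearch_self hsymm]
    linarith [mul_le_mul_of_nonneg_left hsq hc.1]
  have hq : 0 ≤ 1 - t ^ 2 * θ ^ 2 := sub_nonneg.2 hc.2
  intro N
  calc √(a (u - v N) (u - v N))
      ≤ √((1 - t ^ 2 * θ ^ 2) ^ N * a (u - v 0) (u - v 0)) :=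
        sqrt_le_sqrt (le_pow_mul_of_le_mul_succ (x := fun n ↦ a (u - v n) (u - v n)) hq hstep N)
    _ = _ := by rw [sqrt_mul (pow_nonneg hq N), sqrt_pow_eq_rpow_div_two hq]

/-- Geometric energy decay under a weak greedy condition: if each chosen direction
`w_{N+1}` satisfies `r_N(w_{N+1})²/a(w_{N+1},w_{N+1}) ≥ t²θ*² ‖r_N‖²_{a'}` (dual norm
with respect to the energy norm), then the exact line search updates satisfy
`‖u − u_N‖_a ≤ (1 − t²θ*²)^{N/2} ‖u − u_0‖_a`. -/
theorem geometric_energy_decay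
    {H : Type*} [NormedAddCommGroup H] [InnerProductSpace ℝ H] [CompleteSpace H]
    (a : H →ₗ[ℝ] H →ₗ[ℝ] ℝ) (M η : ℝ) (hη : 0 < η)
    (hsymm : ∀ x y : H, a x y = a y x)
    (hcont : ∀ x y : H, |a x y| ≤ M * ‖x‖ * ‖y‖)
    (hcoer : ∀ x : H, η * ‖x‖ ^ 2 ≤ a x x)
    (ℓ : H →L[ℝ] ℝ) (u : H) (hu : ∀ v : H, a u v = ℓ v)
    (t θ : ℝ) (ht : t ∈ Set.Ioc (0 : ℝ) 1) (hθ : θ ∈ Set.Ioc (0 : ℝ) 1)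
    (v : ℕ → H) (w : ℕ → H)
    (hgreedy : ∀ N : ℕ,
      t ^ 2 * θ ^ 2 *
        (sSup {s : ℝ | ∃ z : H, z ≠ 0 ∧ s = (ℓ z - a (v N) z) / Real.sqrt (a z z)}) ^ 2
      ≤ (ℓ (w (N + 1)) - a (v N) (w (N + 1))) ^ 2 / a (w (N + 1)) (w (N + 1)))
    (hupd : ∀ N : ℕ, v (N + 1) = v N +
      ((ℓ (w (N + 1)) - a (v N) (w (N + 1))) / a (w (N + 1)) (w (N + 1))) • w (N + 1)) :
    ∀ N : ℕ, Real.sqrt (a (u - v N) (u - v N))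
      ≤ (1 - t ^ 2 * θ ^ 2) ^ ((N : ℝ) / 2) * Real.sqrt (a (u - v 0) (u - v 0)) :=
  geometric_energy_decay_general a η hη hsymm hcoer ℓ u hu t θ ht hθ v w hgreedy hupd
end

section
/- Weighted Poincaré inequality: for Ω = (0,L) and α ∈ (0,1), there exists a constant C > 0 depending only on α and L such that for every absolutely continuous v : [0,L] → ℝ with v(0) = v(L) = 0 and x^{1-α} v' ∈ L²(0,L), ∫₀^L v(x)² dx ≤ C ∫₀^L x^{2(1-α)} |v'(x)|² dx. -/
/-!
Writing `v x = -∫_x^L v'` and applying Cauchy–Schwarz against the weight `t^{2(1-α)}` gives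
`v(x)² ≤ (∫_x^L t^{-2(1-α)}) · E` with `E` the weighted energy. For `t ≥ x` we have
`t^{-2(1-α)} ≤ x^{-(1-α)} t^{-(1-α)}`, so the first factor is at most `x^{-(1-α)} L^α / α`, even
when `t^{-2(1-α)}` is not integrable at `0`. Integrating `v(x)² ≤ (L^α / α) E x^{-(1-α)}` over
`(0, L)` gives the inequality with `C = (L^α / α)²`.
-/

open MeasureTheory Set intervalIntegral

theorem sq_integral_mul_le_integral_sq_mul_integral_sq {X : Type*} [MeasurableSpace X]
    {μ : Measure X} {f g : X → ℝ} (hf : MemLp f 2 μ) (hg : MemLp g 2 μ) :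
    (∫ x, f x * g x ∂μ) ^ 2 ≤ (∫ x, f x ^ 2 ∂μ) * ∫ x, g x ^ 2 ∂μ := by
  have h := real_inner_mul_inner_self_le (hf.toLp f) (hg.toLp g)
  simp only [L2.inner_def, RCLike.inner_apply, conj_trivial] at h
  have integral_mul_congr {F G F' G' : X → ℝ} (hF : F =ᵐ[μ] F') (hG : G =ᵐ[μ] G') :
      ∫ x, G x * F x ∂μ = ∫ x, F' x * G' x ∂μ :=
    MeasureTheory.integral_congr_ae <| by
      filter_upwards [hF, hG] with x hFx hGx
      rw [hFx, hGx, mul_comm]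
  have hf' := hf.coeFn_toLp
  have hg' := hg.coeFn_toLp
  rw [integral_mul_congr hf' hg', integral_mul_congr hf' hf', integral_mul_congr hg' hg'] at h
  simpa only [sq] using h

theorem sq_integral_le_integral_inv_mul_integral_mul_sq {X : Type*} [MeasurableSpace X]
    {μ : Measure X} {f w : X → ℝ} (hw : ∀ᵐ x ∂μ, 0 < w x)
    (hw_inv : Integrable (fun x => (w x)⁻¹) μ) (hwf : Integrable (fun x => w x * f x ^ 2) μ) :
    (∫ x, f x ∂μ) ^ 2 ≤ (∫ x, (w x)⁻¹ ∂μ) * ∫ x, w x * f x ^ 2 ∂μ := by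
  have hw_inv_nonneg : 0 ≤ ∫ x, (w x)⁻¹ ∂μ :=
    integral_nonneg_of_ae (by filter_upwards [hw] with x hx using (inv_pos.2 hx).le)
  have hwf_nonneg : 0 ≤ ∫ x, w x * f x ^ 2 ∂μ :=
    integral_nonneg_of_ae (by filter_upwards [hw] with x hx using by positivity)
  by_cases hf : Integrable f μ
  swap
  · rw [integral_undef hf, sq, zero_mul]
    exact mul_nonneg hw_inv_nonneg hwf_nonneg
  have hw_meas : AEMeasurable w μ := by
    simpa only [Pi.inv_def, inv_inv] using hw_inv.aemeasurable.inv
  -- Cauchy–Schwarz for the splitting `f = √(w⁻¹) * (√w * f)`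
  have hsq_inv : (fun x => √(w x)⁻¹ ^ 2) =ᵐ[μ] fun x => (w x)⁻¹ := by
    filter_upwards [hw] with x hx using Real.sq_sqrt (inv_pos.2 hx).le
  have hsq_mul : (fun x => (√(w x) * f x) ^ 2) =ᵐ[μ] fun x => w x * f x ^ 2 := by
    filter_upwards [hw] with x hx using by rw [mul_pow, Real.sq_sqrt hx.le]
  have hprod : (fun x => √(w x)⁻¹ * (√(w x) * f x)) =ᵐ[μ] f := by
    filter_upwards [hw] with x hx
    rw [Real.sqrt_inv, inv_mul_cancel_left₀ (Real.sqrt_ne_zero'.2 hx)]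
  have hmem_inv : MemLp (fun x => √(w x)⁻¹) 2 μ :=
    (memLp_two_iff_integrable_sq hw_meas.inv.sqrt.aestronglyMeasurable).2
      (hw_inv.congr hsq_inv.symm)
  have hmem_mul : MemLp (fun x => √(w x) * f x) 2 μ :=
    (memLp_two_iff_integrable_sq (hw_meas.sqrt.mul hf.aemeasurable).aestronglyMeasurable).2
      (hwf.congr hsq_mul.symm)
  calc (∫ x, f x ∂μ) ^ 2 = (∫ x, √(w x)⁻¹ * (√(w x) * f x) ∂μ) ^ 2 := by
        rw [MeasureTheory.integral_congr_ae hprod]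
    _ ≤ (∫ x, √(w x)⁻¹ ^ 2 ∂μ) * ∫ x, (√(w x) * f x) ^ 2 ∂μ :=
        sq_integral_mul_le_integral_sq_mul_integral_sq hmem_inv hmem_mul
    _ = (∫ x, (w x)⁻¹ ∂μ) * ∫ x, w x * f x ^ 2 ∂μ := by
        rw [MeasureTheory.integral_congr_ae hsq_inv, MeasureTheory.integral_congr_ae hsq_mul]

theorem setIntegral_Ioo_zero_rpow {L r : ℝ} (hL : 0 ≤ L) (hr : -1 < r) :
    ∫ t in Ioo 0 L, t ^ r = L ^ (r + 1) / (r + 1) := by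
  rw [← integral_Ioc_eq_integral_Ioo, ← integral_of_le hL, integral_rpow (Or.inl hr),
    Real.zero_rpow (by linarith), sub_zero]

theorem inv_rpow_two_mul_le_rpow_neg_mul {x t β : ℝ} (hx : 0 < x) (hxt : x ≤ t) (hβ : 0 ≤ β) :
    (t ^ (2 * β))⁻¹ ≤ x ^ (-β) * t ^ (-β) := by
  have ht : 0 < t := hx.trans_le hxt
  rw [← Real.rpow_neg ht.le, show -(2 * β) = -β + -β by ring, Real.rpow_add ht]
  exact mul_le_mul_of_nonneg_right (Real.rpow_le_rpow_of_nonpos hx hxt (neg_nonpos.2 hβ))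
    (Real.rpow_nonneg ht.le _)

theorem integrableOn_Ioo_inv_rpow {x L r : ℝ} (hx : 0 < x) :
    IntegrableOn (fun t : ℝ => (t ^ r)⁻¹) (Ioo x L) := by
  have hcont : ContinuousOn (fun t : ℝ => (t ^ r)⁻¹) (Icc x L) := fun t ht =>
    ((Real.continuousAt_rpow_const _ _ (Or.inl (hx.trans_le ht.1).ne')).inv₀
      (Real.rpow_pos_of_pos (hx.trans_le ht.1) _).ne').continuousWithinAt
  exact hcont.integrableOn_Icc.mono_set Ioo_subset_Icc_self

theorem setIntegral_Ioo_inv_rpow_le {L α x : ℝ} (hα0 : 0 < α) (hα1 : α ≤ 1) (hx : x ∈ Ioo 0 L) :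
    ∫ t in Ioo x L, (t ^ (2 * (1 - α)))⁻¹ ≤ x ^ (-(1 - α)) * (L ^ α / α) := by
  have hsing : IntegrableOn (fun t : ℝ => t ^ (-(1 - α))) (Ioo 0 L) :=
    (integrableOn_Ioo_rpow_iff (hx.1.trans hx.2)).2 (by linarith)
  have hsub : Ioo x L ⊆ Ioo 0 L := Ioo_subset_Ioo_left hx.1.le
  calc ∫ t in Ioo x L, (t ^ (2 * (1 - α)))⁻¹
      ≤ ∫ t in Ioo x L, x ^ (-(1 - α)) * t ^ (-(1 - α)) :=
        setIntegral_mono_on (integrableOn_Ioo_inv_rpow hx.1)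
          ((hsing.mono_set hsub).const_mul _) measurableSet_Ioo
          fun t ht => inv_rpow_two_mul_le_rpow_neg_mul hx.1 ht.1.le (by linarith)
    _ = x ^ (-(1 - α)) * ∫ t in Ioo x L, t ^ (-(1 - α)) := integral_const_mul _ _
    _ ≤ x ^ (-(1 - α)) * ∫ t in Ioo 0 L, t ^ (-(1 - α)) := by
        refine mul_le_mul_of_nonneg_left (setIntegral_mono_set hsing ?_ hsub.eventuallyLE)
          (Real.rpow_nonneg hx.1.le _)
        filter_upwards [ae_restrict_mem measurableSet_Ioo] with t ht
        exact Real.rpow_nonneg ht.1.le _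
    _ = x ^ (-(1 - α)) * (L ^ α / α) := by
        rw [setIntegral_Ioo_zero_rpow (hx.1.trans hx.2).le (by linarith), neg_sub,
          sub_add_cancel]

theorem sq_setIntegral_Ioo_le {L α x : ℝ} {g : ℝ → ℝ} (hα0 : 0 < α) (hα1 : α ≤ 1)
    (hx : x ∈ Ioo 0 L) (hg : IntegrableOn (fun t => t ^ (2 * (1 - α)) * g t ^ 2) (Ioo 0 L)) :
    (∫ t in Ioo x L, g t) ^ 2
      ≤ L ^ α / α * x ^ (-(1 - α)) * ∫ t in Ioo 0 L, t ^ (2 * (1 - α)) * g t ^ 2 := by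
  have hsub : Ioo x L ⊆ Ioo 0 L := Ioo_subset_Ioo_left hx.1.le
  have hpos : ∀ᵐ t ∂(volume.restrict (Ioo x L)), 0 < t ^ (2 * (1 - α)) := by
    filter_upwards [ae_restrict_mem measurableSet_Ioo] with t ht
    exact Real.rpow_pos_of_pos (hx.1.trans ht.1) _
  have henergy : ∫ t in Ioo x L, t ^ (2 * (1 - α)) * g t ^ 2
      ≤ ∫ t in Ioo 0 L, t ^ (2 * (1 - α)) * g t ^ 2 := by
    refine setIntegral_mono_set hg ?_ hsub.eventuallyLE
    filter_upwards [ae_restrict_mem measurableSet_Ioo] with t ht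
    exact mul_nonneg (Real.rpow_nonneg ht.1.le _) (sq_nonneg _)
  calc (∫ t in Ioo x L, g t) ^ 2
      ≤ (∫ t in Ioo x L, (t ^ (2 * (1 - α)))⁻¹) * ∫ t in Ioo x L, t ^ (2 * (1 - α)) * g t ^ 2 :=
        sq_integral_le_integral_inv_mul_integral_mul_sq hpos (integrableOn_Ioo_inv_rpow hx.1)
          (hg.mono_set hsub)
    _ ≤ x ^ (-(1 - α)) * (L ^ α / α) * ∫ t in Ioo 0 L, t ^ (2 * (1 - α)) * g t ^ 2 :=
        mul_le_mul (setIntegral_Ioo_inv_rpow_le hα0 hα1 hx) henergy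
          (integral_nonneg_of_ae (by filter_upwards [hpos] with t ht using by positivity))
          (by have := hx.1; have := hx.1.trans hx.2; positivity)
    _ = _ := by ring

theorem eq_neg_setIntegral_Ioo_of_eq_primitive {L x : ℝ} {v v' : ℝ → ℝ}
    (hv : ∀ y ∈ Icc 0 L, v y = ∫ t in (0 : ℝ)..y, v' t) (hvL : v L = 0)
    (hv' : IntervalIntegrable v' volume 0 L) (hx : x ∈ Icc 0 L) :
    v x = -∫ t in Ioo x L, v' t := by
  have hx' : x ∈ uIcc 0 L := by rwa [uIcc_of_le (hx.1.trans hx.2)]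
  have hsplit := integral_interval_sub_left hv'
    (hv'.mono_set (uIcc_subset_uIcc left_mem_uIcc hx'))
  rw [← hv L ⟨hx.1.trans hx.2, le_rfl⟩, ← hv x hx, hvL, integral_of_le hx.2,
    integral_Ioc_eq_integral_Ioo] at hsplit
  linarith

/-- Weighted Poincaré inequality: for `Ω = (0,L)` and `α ∈ (0,1)` there is a
constant `C > 0`, depending only on `α` and `L`, such that every absolutely
continuous `v` with `v(0) = v(L) = 0` and `x^{1-α} v' ∈ L²` satisfies
`∫₀^L v² ≤ C ∫₀^L x^{2(1-α)} |v'|²`. -/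
theorem weighted_poincare
    (L α : ℝ) (hL : 0 < L) (hα : α ∈ Set.Ioo (0 : ℝ) 1) :
    ∃ C : ℝ, 0 < C ∧
      ∀ v v' : ℝ → ℝ,
        (∀ x ∈ Set.Icc 0 L, v x = ∫ t in (0 : ℝ)..x, v' t) →
        v L = 0 →
        IntervalIntegrable v' volume 0 L →
        IntegrableOn (fun x => x ^ (2 * (1 - α)) * (v' x) ^ 2) (Set.Ioo 0 L) →
        (∫ x in Set.Ioo 0 L, (v x) ^ 2)
          ≤ C * ∫ x in Set.Ioo 0 L, x ^ (2 * (1 - α)) * (v' x) ^ 2 := by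
  obtain ⟨hα0, hα1⟩ := hα
  refine ⟨(L ^ α / α) ^ 2, by positivity, fun v v' hv hvL hv' hw => ?_⟩
  set I := ∫ x in Ioo 0 L, x ^ (2 * (1 - α)) * v' x ^ 2
  have hpointwise : ∀ x ∈ Ioo 0 L, v x ^ 2 ≤ L ^ α / α * I * x ^ (-(1 - α)) := by
    intro x hx
    rw [eq_neg_setIntegral_Ioo_of_eq_primitive hv hvL hv' (Ioo_subset_Icc_self hx), neg_sq]
    exact (sq_setIntegral_Ioo_le hα0 hα1.le hx hw).trans_eq (by ring)
  have hsing : IntegrableOn (fun x : ℝ => x ^ (-(1 - α))) (Ioo 0 L) :=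
    (integrableOn_Ioo_rpow_iff hL).2 (by linarith)
  -- `integral_mono_of_nonneg` needs no integrability of `v ^ 2`, only of the bound
  calc ∫ x in Ioo 0 L, v x ^ 2
      ≤ ∫ x in Ioo 0 L, L ^ α / α * I * x ^ (-(1 - α)) :=
        integral_mono_of_nonneg (Filter.Eventually.of_forall fun x => sq_nonneg (v x))
          (hsing.const_mul _) ((ae_restrict_iff' measurableSet_Ioo).2 (ae_of_all _ hpointwise))
    _ = (L ^ α / α) ^ 2 * I := by
        rw [MeasureTheory.integral_const_mul, setIntegral_Ioo_zero_rpow hL.le (by linarith),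
          neg_sub, sub_add_cancel]
        ring
end

section
/- One-step contraction inequality: in a real Hilbert space with symmetric coercive form a, let e ∈ H, r(v) = a(e,v), and suppose w ∈ H with a(w,w) > 0 satisfies r(w)² / a(w,w) ≥ c² · a(e,e) for some c ∈ (0,1]. Then with τ = r(w)/a(w,w), one has a(e − τw, e − τw) ≤ (1 − c²) a(e,e). -/
/-! The step `e ↦ e - τ w` is the `a`-orthogonal projection of `e` off `w`, so by Pythagoras it
lowers the energy `a(e,e)` by exactly `r(w)² / a(w,w)`, which the greedy hypothesis bounds
below by `c² a(e,e)`. -/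

/-- The identity also holds when `a w w = 0`: then both `a e w / a w w` and the correction
term vanish by the convention `x / 0 = 0`. -/
theorem LinearMap.apply_sub_ratio_smul_self {K E : Type*} [Field K] [AddCommGroup E]
    [Module K E] (a : E →ₗ[K] E →ₗ[K] K) {e w : E} (hsymm : a w e = a e w) :
    a (e - (a e w / a w w) • w) (e - (a e w / a w w) • w) = a e e - a e w ^ 2 / a w w := by
  simp only [map_sub, map_smul, LinearMap.sub_apply, LinearMap.smul_apply, smul_eq_mul, hsymm]
  rcases eq_or_ne (a w w) 0 with hw | hw
  · simp [hw]
  · field_simp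
    ring

theorem one_step_contraction_general
    {H : Type*} [NormedAddCommGroup H] [InnerProductSpace ℝ H]
    (a : H →ₗ[ℝ] H →ₗ[ℝ] ℝ)
    (hsymm : ∀ x y : H, a x y = a y x)
    (e w : H)
    (c : ℝ)
    (hgreedy : c ^ 2 * a e e ≤ (a e w) ^ 2 / a w w) :
    a (e - (a e w / a w w) • w) (e - (a e w / a w w) • w)
      ≤ (1 - c ^ 2) * a e e := by
  rw [a.apply_sub_ratio_smul_self (hsymm w e)]
  linarith

/-- One-step contraction inequality: if `r(v) = a(e,v)` and `w` with `a(w,w) > 0`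
satisfies `r(w)²/a(w,w) ≥ c² a(e,e)` for some `c ∈ (0,1]`, then with
`τ = r(w)/a(w,w)` one has `a(e − τw, e − τw) ≤ (1 − c²) a(e,e)`. -/
theorem one_step_contraction
    {H : Type*} [NormedAddCommGroup H] [InnerProductSpace ℝ H] [CompleteSpace H]
    (a : H →ₗ[ℝ] H →ₗ[ℝ] ℝ) (M η : ℝ) (hη : 0 < η)
    (hsymm : ∀ x y : H, a x y = a y x)
    (hcont : ∀ x y : H, |a x y| ≤ M * ‖x‖ * ‖y‖)
    (hcoer : ∀ x : H, η * ‖x‖ ^ 2 ≤ a x x)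
    (e w : H) (hw : 0 < a w w)
    (c : ℝ) (hc : c ∈ Set.Ioc (0 : ℝ) 1)
    (hgreedy : c ^ 2 * a e e ≤ (a e w) ^ 2 / a w w) :
    a (e - (a e w / a w w) • w) (e - (a e w / a w w) • w)
      ≤ (1 - c ^ 2) * a e e :=
  one_step_contraction_general a hsymm e w c hgreedy
end
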